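/- arXiv:1811.12329 — 3 statements merged into one kernel-verified Lean document; each statement's English description precedes it below -/
import Mathlib

section
/- Let ρ_AB be a density matrix on ℂ^{d_A} ⊗ ℂ^{d_B}. Then ρ_AB = ρ_A ⊗ ρ_B (where ρ_A, ρ_B are the reduced density matrices obtained by partial trace) if and only if there exists a density matrix σ_B on ℂ^{d_B} such that for every positive semidefinite d_A×d_A matrix Π there exists a scalar c ≥ 0 with Tr_A[(Π ⊗ I)ρ_AB] = c·σ_B. -/
open Matrix BigOperators
open scoped Kronecker ComplexOrder

noncomputable section

namespace AWD

/-- Matrix logarithm via the spectral decomposition, with the convention `log 0 = 0`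
(`Real.log 0 = 0` in Mathlib); junk value `0` on non-Hermitian matrices. -/
noncomputable def matLog {n : Type*} [Fintype n] [DecidableEq n] (A : Matrix n n ℂ) :
    Matrix n n ℂ :=
  if hA : A.IsHermitian then
    (hA.eigenvectorUnitary : Matrix n n ℂ) *
      Matrix.diagonal (fun i => (Real.log (hA.eigenvalues i) : ℂ)) *
      (star (hA.eigenvectorUnitary : Matrix n n ℂ))
  else 0

/-- von Neumann entropy `S(ρ) = −Tr[ρ log ρ]`. -/
noncomputable def vN {n : Type*} [Fintype n] [DecidableEq n] (ρ : Matrix n n ℂ) : ℝ :=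
  - ((ρ * matLog ρ).trace).re

/-- Quantum relative entropy `S(ρ‖σ) = Tr[ρ log ρ] − Tr[ρ log σ]`. -/
noncomputable def relEnt {n : Type*} [Fintype n] [DecidableEq n] (ρ σ : Matrix n n ℂ) : ℝ :=
  ((ρ * matLog ρ).trace).re - ((ρ * matLog σ).trace).re

/-- A density matrix: positive semidefinite with unit trace. -/
def IsDensityMatrix {n : Type*} [Fintype n] (ρ : Matrix n n ℂ) : Prop :=
  ρ.PosSemidef ∧ ρ.trace = 1

/-- Partial trace over the first (Alice's) tensor factor. -/
def ptraceA {a b : Type*} [Fintype a] (X : Matrix (a × b) (a × b) ℂ) : Matrix b b ℂ :=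
  fun y y' => ∑ x : a, X (x, y) (x, y')

/-- Partial trace over the second (Bob's) tensor factor. -/
def ptraceB {a b : Type*} [Fintype b] (X : Matrix (a × b) (a × b) ℂ) : Matrix a a ℂ :=
  fun x x' => ∑ y : b, X (x, y) (x', y)

/-- A POVM indexed by `ι` on system `a`. -/
structure POVM (ι a : Type*) [Fintype ι] [Fintype a] [DecidableEq a] where
  elem : ι → Matrix a a ℂ
  pos : ∀ i, (elem i).PosSemidef
  sum_eq : ∑ i, elem i = 1

variable {ι a b : Type*} [Fintype ι] [Fintype a] [DecidableEq a] [Fintype b] [DecidableEq b]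

/-- Probability `p_i = Tr[(Π_i ⊗ I) ρ_AB]` of outcome `i`. -/
noncomputable def povmProb (P : POVM ι a) (ρ : Matrix (a × b) (a × b) ℂ) (i : ι) : ℝ :=
  (((P.elem i ⊗ₖ (1 : Matrix b b ℂ)) * ρ).trace).re

/-- Post-measurement state `ρ̃_i = Tr_A[(Π_i ⊗ I) ρ_AB] / p_i` on Bob's side. -/
noncomputable def povmPost (P : POVM ι a) (ρ : Matrix (a × b) (a × b) ℂ) (i : ι) :
    Matrix b b ℂ :=
  (povmProb P ρ i)⁻¹ • ptraceA ((P.elem i ⊗ₖ (1 : Matrix b b ℂ)) * ρ)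

/-- `Σ_{i : p_i > 0} p_i S(ρ̃_i‖γ_B)`. -/
noncomputable def workSum (P : POVM ι a) (ρ : Matrix (a × b) (a × b) ℂ)
    (γB : Matrix b b ℂ) : ℝ :=
  ∑ i, if 0 < povmProb P ρ i then povmProb P ρ i * relEnt (povmPost P ρ i) γB else 0

/-- The work of assistance, a supremum over all POVMs on Alice's side. -/
noncomputable def Wa (ρ : Matrix (a × b) (a × b) ℂ) (γB : Matrix b b ℂ) (β : ℝ) : ℝ :=
  ⨆ (k : ℕ), ⨆ (P : POVM (Fin k) a), (1 / β) * workSum P ρ γB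

/-- The Henderson–Vedral measure of classical correlations
`J→(ρ_AB) = sup_{POVM} [S(ρ_B) − Σ_{i : p_i>0} p_i S(ρ̃_i)]`. -/
noncomputable def Jarrow (ρ : Matrix (a × b) (a × b) ℂ) : ℝ :=
  ⨆ (k : ℕ), ⨆ (P : POVM (Fin k) a),
    (vN (ptraceA ρ) -
      ∑ i, if 0 < povmProb P ρ i then povmProb P ρ i * vN (povmPost P ρ i) else 0)

/-!
If `ρ = ρ_A ⊗ ρ_B`, then `Tr_A[(Π ⊗ I)ρ] = Tr(Π ρ_A) ρ_B` with `Tr(Π ρ_A) ≥ 0`, so `σ_B = ρ_B`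
works. Conversely, `Π ↦ Tr_A[(Π ⊗ I)ρ]` is linear and the positive semidefinite matrices span
all matrices, so every `Tr_A[(Π ⊗ I)ρ]` is a multiple of `σ_B`. Evaluated at the matrix units
this says `ρ = M ⊗ σ_B` for some `M`, and the unit traces then force `M = ρ_A` and `σ_B = ρ_B`.
-/

section PartialTrace

variable {m n : Type*}

lemma ptraceA_eq_sum_submatrix [Fintype m] (ρ : Matrix (m × n) (m × n) ℂ) :
    ptraceA ρ = ∑ x : m, ρ.submatrix (Prod.mk x) (Prod.mk x) := by
  ext y y'
  simp [ptraceA, Matrix.sum_apply]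

lemma ptraceB_eq_sum_submatrix [Fintype n] (ρ : Matrix (m × n) (m × n) ℂ) :
    ptraceB ρ = ∑ y : n, ρ.submatrix (fun x => (x, y)) (fun x => (x, y)) := by
  ext x x'
  simp [ptraceB, Matrix.sum_apply]

lemma posSemidef_ptraceA [Fintype m] {ρ : Matrix (m × n) (m × n) ℂ} (hρ : ρ.PosSemidef) :
    (ptraceA ρ).PosSemidef := by
  rw [ptraceA_eq_sum_submatrix]
  exact posSemidef_sum _ fun x _ => hρ.submatrix _

lemma posSemidef_ptraceB [Fintype n] {ρ : Matrix (m × n) (m × n) ℂ} (hρ : ρ.PosSemidef) :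
    (ptraceB ρ).PosSemidef := by
  rw [ptraceB_eq_sum_submatrix]
  exact posSemidef_sum _ fun y _ => hρ.submatrix _

lemma trace_ptraceA [Fintype m] [Fintype n] (ρ : Matrix (m × n) (m × n) ℂ) :
    (ptraceA ρ).trace = ρ.trace := by
  simp only [Matrix.trace, Matrix.diag, ptraceA, Fintype.sum_prod_type]
  exact Finset.sum_comm

lemma IsDensityMatrix.ptraceA [Fintype m] [Fintype n] {ρ : Matrix (m × n) (m × n) ℂ}
    (hρ : IsDensityMatrix ρ) : IsDensityMatrix (ptraceA ρ) :=
  ⟨posSemidef_ptraceA hρ.1, (trace_ptraceA ρ).trans hρ.2⟩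

lemma ptraceA_kronecker [Fintype m] (M : Matrix m m ℂ) (N : Matrix n n ℂ) :
    ptraceA (M ⊗ₖ N) = M.trace • N := by
  ext y y'
  simp [ptraceA, Matrix.trace, Finset.sum_mul]

lemma ptraceB_kronecker [Fintype n] (M : Matrix m m ℂ) (N : Matrix n n ℂ) :
    ptraceB (M ⊗ₖ N) = N.trace • M := by
  ext x x'
  simp only [ptraceB, kronecker_apply, Matrix.smul_apply, Matrix.trace, Matrix.diag, smul_eq_mul,
    Finset.sum_mul]
  exact Finset.sum_congr rfl fun _ _ => mul_comm _ _

lemma eq_ptraceB_kronecker_ptraceA_of_eq_kronecker [Fintype m] [Fintype n]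
    {ρ : Matrix (m × n) (m × n) ℂ} {M : Matrix m m ℂ} {σ : Matrix n n ℂ}
    (hρ : ρ.trace = 1) (hσ : σ.trace = 1) (h : ρ = M ⊗ₖ σ) : ρ = ptraceB ρ ⊗ₖ ptraceA ρ := by
  subst h
  have hM : M.trace = 1 := by rwa [trace_kronecker, hσ, mul_one] at hρ
  rw [ptraceA_kronecker, ptraceB_kronecker, hM, hσ, one_smul, one_smul]

end PartialTrace

section Steering

variable {m n : Type*} [Fintype m] [Fintype n] [DecidableEq n]

/-- The unnormalised state of `B` conditioned on the outcome `Π` of a measurement on `A`. -/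
def steeringMap (ρ : Matrix (m × n) (m × n) ℂ) : Matrix m m ℂ →ₗ[ℂ] Matrix n n ℂ where
  toFun Pi := ptraceA ((Pi ⊗ₖ (1 : Matrix n n ℂ)) * ρ)
  map_add' P Q := by
    ext y y'
    simp [ptraceA, add_kronecker, Matrix.add_mul, Finset.sum_add_distrib]
  map_smul' c P := by
    ext y y'
    simp [ptraceA, smul_kronecker, Matrix.smul_mul, Finset.mul_sum]

lemma steeringMap_apply (ρ : Matrix (m × n) (m × n) ℂ) (Pi : Matrix m m ℂ) :
    steeringMap ρ Pi = ptraceA ((Pi ⊗ₖ (1 : Matrix n n ℂ)) * ρ) :=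
  rfl

lemma steeringMap_kronecker (Pi M : Matrix m m ℂ) (N : Matrix n n ℂ) :
    steeringMap (M ⊗ₖ N) Pi = (Pi * M).trace • N := by
  rw [steeringMap_apply, ← mul_kronecker_mul, Matrix.one_mul, ptraceA_kronecker]

lemma steeringMap_single_apply [DecidableEq m] (ρ : Matrix (m × n) (m × n) ℂ) (x u : m)
    (y y' : n) : steeringMap ρ (single x u 1) y y' = ρ (u, y) (x, y') := by
  simp [steeringMap_apply, ptraceA, Matrix.mul_apply, Fintype.sum_prod_type,
    Matrix.single_apply, Matrix.one_apply, ite_and]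

lemma exists_eq_kronecker_of_steeringMap_mem_span [DecidableEq m]
    {ρ : Matrix (m × n) (m × n) ℂ} {σ : Matrix n n ℂ}
    (h : ∀ Pi, steeringMap ρ Pi ∈ ℂ ∙ σ) : ∃ M : Matrix m m ℂ, ρ = M ⊗ₖ σ := by
  choose c hc using fun Pi => Submodule.mem_span_singleton.mp (h Pi)
  refine ⟨of fun u x => c (single x u 1), ?_⟩
  ext ⟨u, y⟩ ⟨x, y'⟩
  rw [← steeringMap_single_apply ρ x u, ← hc]
  rfl

end Steering

section PositiveMatrices

variable {m : Type*} [Fintype m] [DecidableEq m]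

open scoped MatrixOrder Matrix.Norms.L2Operator in
lemma span_posSemidef : Submodule.span ℂ {A : Matrix m m ℂ | A.PosSemidef} = ⊤ := by
  simpa only [nonneg_iff_posSemidef] using CStarAlgebra.span_nonneg (A := Matrix m m ℂ)

lemma apply_mem_of_forall_posSemidef {M : Type*} [AddCommGroup M] [Module ℂ M]
    (f : Matrix m m ℂ →ₗ[ℂ] M) (p : Submodule ℂ M) (h : ∀ A, A.PosSemidef → f A ∈ p)
    (A : Matrix m m ℂ) : f A ∈ p := by
  have hle : Submodule.span ℂ {A : Matrix m m ℂ | A.PosSemidef} ≤ p.comap f :=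
    Submodule.span_le.mpr h
  rw [span_posSemidef] at hle
  exact hle Submodule.mem_top

open scoped MatrixOrder in
lemma _root_.Matrix.PosSemidef.trace_mul_nonneg {A B : Matrix m m ℂ} (hA : A.PosSemidef)
    (hB : B.PosSemidef) : 0 ≤ (A * B).trace := by
  obtain ⟨C, rfl⟩ := CStarAlgebra.nonneg_iff_eq_star_mul_self.mp hA.nonneg
  rw [Matrix.mul_assoc, trace_mul_comm]
  exact (hB.mul_mul_conjTranspose_same C).trace_nonneg

end PositiveMatrices

/-- a bipartite density matrix `ρ_AB` is a product `ρ_A ⊗ ρ_B` of its marginals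
iff there is a density matrix `σ_B` such that every positive semidefinite `Π` on `A` yields
`Tr_A[(Π ⊗ I)ρ_AB] = c·σ_B` for some scalar `c ≥ 0`. -/
theorem assisted_work_distillation_stmt1 {dA dB : ℕ}
    (ρ : Matrix (Fin dA × Fin dB) (Fin dA × Fin dB) ℂ) (hρ : IsDensityMatrix ρ) :
    ρ = (ptraceB ρ) ⊗ₖ (ptraceA ρ) ↔
      ∃ σB : Matrix (Fin dB) (Fin dB) ℂ, IsDensityMatrix σB ∧
        ∀ Pi : Matrix (Fin dA) (Fin dA) ℂ, Pi.PosSemidef →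
          ∃ c : ℝ, 0 ≤ c ∧
            ptraceA ((Pi ⊗ₖ (1 : Matrix (Fin dB) (Fin dB) ℂ)) * ρ) = c • σB := by
  constructor
  · intro h
    refine ⟨ptraceA ρ, hρ.ptraceA, fun Pi hPi => ?_⟩
    obtain ⟨c, hc, hc_eq⟩ := RCLike.nonneg_iff_exists_ofReal.mp
      (hPi.trace_mul_nonneg (posSemidef_ptraceB hρ.1))
    refine ⟨c, hc, ?_⟩
    calc ptraceA ((Pi ⊗ₖ (1 : Matrix (Fin dB) (Fin dB) ℂ)) * ρ)
        = steeringMap (ptraceB ρ ⊗ₖ ptraceA ρ) Pi := by rw [← h, steeringMap_apply]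
      _ = c • ptraceA ρ := by
        rw [steeringMap_kronecker, ← hc_eq, RCLike.real_smul_eq_coe_smul (K := ℂ)]
  · rintro ⟨σB, hσB, hsteer⟩
    have hspan : ∀ Pi, steeringMap ρ Pi ∈ ℂ ∙ σB := by
      refine apply_mem_of_forall_posSemidef _ _ fun Pi hPi => ?_
      obtain ⟨c, -, hc⟩ := hsteer Pi hPi
      refine Submodule.mem_span_singleton.mpr ⟨c, ?_⟩
      rw [steeringMap_apply, hc, RCLike.real_smul_eq_coe_smul (K := ℂ)]
      rfl
    obtain ⟨M, hM⟩ := exists_eq_kronecker_of_steeringMap_mem_span hspan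
    exact eq_ptraceB_kronecker_ptraceA_of_eq_kronecker hρ.2 hσB.2 hM

end AWD
end
end

section
/- Let ρ_AB be a density matrix on ℂ^{d_A} ⊗ ℂ^{d_B} and γ_B a positive definite density matrix on ℂ^{d_B}. For every POVM {Π_i} on A, with p_i = Tr[(Π_i ⊗ I)ρ_AB] and ρ̃_i = Tr_A[(Π_i ⊗ I)ρ_AB]/p_i (for p_i > 0), one has Σ_{i : p_i > 0} p_i · S(ρ̃_i ‖ γ_B) ≥ S(ρ_B ‖ γ_B). Consequently β·W_a(ρ_AB) ≥ S(ρ_B‖γ_B). -/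
open Matrix BigOperators
open scoped Kronecker ComplexOrder

noncomputable section

namespace AWD

variable {ι a b : Type*} [Fintype ι] [Fintype a] [DecidableEq a] [Fintype b] [DecidableEq b]

/-!
Write `τᵢ = pᵢ ρ̃ᵢ = Tr_A[(Πᵢ ⊗ I) ρ_AB]`: the `τᵢ` are positive and sum to `ρ_B`. As
`X ↦ Tr[X log σ]` is linear, this gives the chain rule
`Σᵢ pᵢ S(ρ̃ᵢ‖γ_B) = S(ρ_B‖γ_B) + Σᵢ pᵢ S(ρ̃ᵢ‖ρ_B)`,
and each `S(ρ̃ᵢ‖ρ_B)` is nonnegative by Klein's inequality, which applies because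
`pᵢ ρ̃ᵢ = τᵢ ≤ ρ_B` keeps the support of `ρ̃ᵢ` inside that of `ρ_B`. In eigenbases, Klein's
inequality is `x - y ≤ x (log x - log y)` averaged against the doubly stochastic matrix of
squared overlaps `|⟨aᵢ, bⱼ⟩|²`.

For `W_a`, the same chain rule bounds every such sum by `S(ρ_B‖γ_B) + S(ρ_B)`, so the
supremum is a genuine one and dominates the value of the trivial POVM `{I}`.
-/

lemma re_trace_smul_mul {n : Type*} [Fintype n] (r : ℝ) (A M : Matrix n n ℂ) :
    ((r • A) * M).trace.re = r * (A * M).trace.re := by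
  rw [Matrix.smul_mul, Matrix.trace_smul, Complex.real_smul, Complex.re_ofReal_mul]

section Spectral

variable {n : Type*} [Fintype n] [DecidableEq n]

lemma sum_eigenvalues_eq_re_trace {A : Matrix n n ℂ} (hA : A.IsHermitian) :
    ∑ i, hA.eigenvalues i = A.trace.re := by
  simp [hA.trace_eq_sum_eigenvalues, Complex.re_sum]

lemma ofReal_re_trace {A : Matrix n n ℂ} (hA : A.IsHermitian) :
    ((A.trace.re : ℝ) : ℂ) = A.trace := by
  rw [← sum_eigenvalues_eq_re_trace hA, hA.trace_eq_sum_eigenvalues]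
  push_cast
  rfl

lemma eigenvalues_le_one {ρ : Matrix n n ℂ} (hρ : IsDensityMatrix ρ) (i : n) :
    hρ.1.1.eigenvalues i ≤ 1 := by
  have hsum : ∑ j, hρ.1.1.eigenvalues j = 1 := by
    rw [sum_eigenvalues_eq_re_trace, hρ.2, Complex.one_re]
  exact hsum ▸ Finset.single_le_sum (fun j _ => hρ.1.eigenvalues_nonneg j) (Finset.mem_univ i)

lemma normSq_mem_doublyStochastic {W : Matrix n n ℂ} (hW : W ∈ unitaryGroup n ℂ) :
    Matrix.of (fun i j => Complex.normSq (W i j)) ∈ doublyStochastic ℝ n := by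
  have hdiag : ∀ {M : Matrix n n ℂ}, M * Mᴴ = 1 → ∀ i, ∑ j, Complex.normSq (M i j) = 1 := by
    intro M hM i
    have h := congrFun (congrFun hM i) i
    simp only [Matrix.mul_apply, Matrix.conjTranspose_apply, Matrix.one_apply_eq,
      Complex.star_def, Complex.mul_conj] at h
    exact_mod_cast h
  refine mem_doublyStochastic_iff_sum.mpr ⟨fun i j => Complex.normSq_nonneg _, hdiag ?_, ?_⟩
  · exact mem_unitaryGroup_iff.mp hW
  · intro j
    simpa [Complex.normSq_conj] using hdiag (M := Wᴴ) (by
      simpa [← Matrix.star_eq_conjTranspose] using mem_unitaryGroup_iff'.mp hW) j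

/-- `eigenOverlap hA hB i j = |⟨aᵢ, bⱼ⟩|²` for the eigenvector bases `(aᵢ)` of `A` and `(bⱼ)`
of `B`. -/
def eigenOverlap {A B : Matrix n n ℂ} (hA : A.IsHermitian) (hB : B.IsHermitian) :
    Matrix n n ℝ :=
  Matrix.of fun i j =>
    Complex.normSq ((star (hA.eigenvectorUnitary : Matrix n n ℂ) * hB.eigenvectorUnitary) i j)

lemma eigenOverlap_mem_doublyStochastic {A B : Matrix n n ℂ} (hA : A.IsHermitian)
    (hB : B.IsHermitian) : eigenOverlap hA hB ∈ doublyStochastic ℝ n :=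
  normSq_mem_doublyStochastic
    (mul_mem (Unitary.star_mem hA.eigenvectorUnitary.2) hB.eigenvectorUnitary.2)

lemma eigenOverlap_self {A : Matrix n n ℂ} (hA : A.IsHermitian) : eigenOverlap hA hA = 1 := by
  ext i j
  simp only [eigenOverlap, Unitary.coe_star_mul_self, Matrix.of_apply, Matrix.one_apply]
  split_ifs <;> simp

lemma conjTranspose_mul_diagonal_mul_apply_self (W : Matrix n n ℂ) (d : n → ℝ) (j : n) :
    (Wᴴ * Matrix.diagonal (fun i => (d i : ℂ)) * W) j j =
      ((∑ i, d i * Complex.normSq (W i j) : ℝ) : ℂ) := by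
  rw [Matrix.mul_apply]
  simp only [Matrix.mul_diagonal, Matrix.conjTranspose_apply, Complex.star_def]
  push_cast
  refine Finset.sum_congr rfl fun i _ => ?_
  rw [← Complex.mul_conj]
  ring

lemma star_mul_mul_eigenvectorUnitary_apply_self {A B : Matrix n n ℂ} (hA : A.IsHermitian)
    (hB : B.IsHermitian) (j : n) :
    (star (hB.eigenvectorUnitary : Matrix n n ℂ) * A * hB.eigenvectorUnitary) j j =
      ((∑ i, hA.eigenvalues i * eigenOverlap hA hB i j : ℝ) : ℂ) := by
  set U := (hA.eigenvectorUnitary : Matrix n n ℂ)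
  set V := (hB.eigenvectorUnitary : Matrix n n ℂ)
  have hconj : star V * A * V =
      (star U * V)ᴴ * Matrix.diagonal (fun i => (hA.eigenvalues i : ℂ)) * (star U * V) := by
    conv_lhs => rw [hA.spectral_theorem, Unitary.conjStarAlgAut_apply]
    rw [← Matrix.star_eq_conjTranspose, star_mul, star_star]
    simp only [Matrix.mul_assoc]
    rfl
  rw [hconj, conjTranspose_mul_diagonal_mul_apply_self]
  rfl

lemma re_trace_mul_matLog {A B : Matrix n n ℂ} (hA : A.IsHermitian) (hB : B.IsHermitian) :
    (A * matLog B).trace.re =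
      ∑ j, (∑ i, hA.eigenvalues i * eigenOverlap hA hB i j) * Real.log (hB.eigenvalues j) := by
  have hcycle : (A * matLog B).trace =
      (star (hB.eigenvectorUnitary : Matrix n n ℂ) * A * hB.eigenvectorUnitary *
        Matrix.diagonal (fun j => (Real.log (hB.eigenvalues j) : ℂ))).trace := by
    rw [matLog, dif_pos hB, ← Matrix.mul_assoc, Matrix.trace_mul_cycle, Matrix.mul_assoc _ A]
    simp only [Matrix.mul_assoc]
  rw [hcycle]
  simp only [Matrix.trace, Matrix.diag, Matrix.mul_diagonal, Complex.re_sum,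
    star_mul_mul_eigenvectorUnitary_apply_self hA hB, ← Complex.ofReal_mul, Complex.ofReal_re]

lemma re_trace_mul_matLog_self {A : Matrix n n ℂ} (hA : A.IsHermitian) :
    (A * matLog A).trace.re = ∑ i, hA.eigenvalues i * Real.log (hA.eigenvalues i) := by
  simp [re_trace_mul_matLog hA hA, eigenOverlap_self, Matrix.one_apply]

lemma vN_nonneg {ρ : Matrix n n ℂ} (hρ : IsDensityMatrix ρ) : 0 ≤ vN ρ := by
  rw [vN, re_trace_mul_matLog_self hρ.1.1, neg_nonneg]
  exact Finset.sum_nonpos fun i _ => mul_nonpos_of_nonneg_of_nonpos (hρ.1.eigenvalues_nonneg i)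
    (Real.log_nonpos (hρ.1.eigenvalues_nonneg i) (eigenvalues_le_one hρ i))

end Spectral

section Klein

variable {n : Type*} [Fintype n] [DecidableEq n]

lemma sub_le_mul_log_sub_log {x y : ℝ} (hx : 0 < x) (hy : 0 < y) :
    x - y ≤ x * (Real.log x - Real.log y) := by
  have h := Real.log_le_sub_one_of_pos (div_pos hy hx)
  rw [Real.log_div hy.ne' hx.ne'] at h
  have := mul_le_mul_of_nonneg_left h hx.le
  rw [mul_sub_one, mul_div_cancel₀ _ hx.ne'] at this
  linarith

lemma sum_sub_sum_le_of_mem_doublyStochastic {x y : n → ℝ} {c : Matrix n n ℝ}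
    (hc : c ∈ doublyStochastic ℝ n) (hx : 0 ≤ x) (hy : 0 ≤ y)
    (hsupp : ∀ i j, 0 < x i → y j = 0 → c i j = 0) :
    ∑ i, x i - ∑ j, y j ≤
      ∑ i, x i * Real.log (x i) - ∑ j, (∑ i, x i * c i j) * Real.log (y j) := by
  obtain ⟨hc0, hrow, hcol⟩ := mem_doublyStochastic_iff_sum.mp hc
  have hlhs : ∑ i, x i - ∑ j, y j = ∑ i, ∑ j, c i j * (x i - y j) := by
    simp only [mul_sub, Finset.sum_sub_distrib]
    rw [Finset.sum_comm (f := fun i j => c i j * y j)]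
    simp only [← Finset.sum_mul, hcol, one_mul, mul_comm (c _ _) (x _), ← Finset.mul_sum, hrow,
      mul_one]
  have hrhs : ∑ i, x i * Real.log (x i) - ∑ j, (∑ i, x i * c i j) * Real.log (y j) =
      ∑ i, ∑ j, c i j * (x i * (Real.log (x i) - Real.log (y j))) := by
    simp only [mul_sub, Finset.sum_sub_distrib, Finset.sum_mul]
    rw [Finset.sum_comm (f := fun j i => x i * c i j * Real.log (y j))]
    congr 1
    · refine Finset.sum_congr rfl fun i _ => ?_
      rw [← Finset.sum_mul, hrow, one_mul]
    · refine Finset.sum_congr rfl fun i _ => Finset.sum_congr rfl fun j _ => by ring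
  rw [hlhs, hrhs]
  refine Finset.sum_le_sum fun i _ => Finset.sum_le_sum fun j _ => ?_
  rcases (hx i).eq_or_lt with hxi | hxi
  · rw [← hxi]
    simpa using mul_nonneg (hc0 i j) (hy j)
  rcases (hy j).eq_or_lt with hyj | hyj
  · simp [hsupp i j hxi hyj.symm]
  · exact mul_le_mul_of_nonneg_left (sub_le_mul_log_sub_log hxi hyj) (hc0 i j)

lemma eigenOverlap_eq_zero_of_smul_le {A B : Matrix n n ℂ} (hA : A.PosSemidef)
    (hB : B.PosSemidef) {p : ℝ} (hp : 0 < p) (hle : (B - p • A).PosSemidef) {i j : n}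
    (hi : 0 < hA.1.eigenvalues i) (hj : hB.1.eigenvalues j = 0) :
    eigenOverlap hA.1 hB.1 i j = 0 := by
  have hsum : ∑ k, hA.1.eigenvalues k * eigenOverlap hA.1 hB.1 k j ≤ 0 := by
    have h := (hle.conjTranspose_mul_mul_same (hB.1.eigenvectorUnitary : Matrix n n ℂ)).diag_nonneg
      (i := j)
    rw [← Matrix.star_eq_conjTranspose, Matrix.mul_sub, Matrix.sub_mul, Matrix.mul_smul,
      Matrix.smul_mul, Matrix.sub_apply, Matrix.smul_apply,
      star_mul_mul_eigenvectorUnitary_apply_self hB.1 hB.1,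
      star_mul_mul_eigenvectorUnitary_apply_self hA.1 hB.1, eigenOverlap_self] at h
    have := (Complex.le_def.mp h).1
    simp only [Matrix.one_apply, mul_ite, mul_one, mul_zero, Finset.sum_ite_eq',
      Finset.mem_univ, if_true, hj, Complex.sub_re, Complex.ofReal_re, Complex.real_smul,
      Complex.re_ofReal_mul, Complex.zero_re, zero_sub, neg_nonneg] at this
    exact nonpos_of_mul_nonpos_right this hp
  have hnonneg : ∀ k ∈ Finset.univ, 0 ≤ hA.1.eigenvalues k * eigenOverlap hA.1 hB.1 k j :=
    fun k _ => mul_nonneg (hA.eigenvalues_nonneg k)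
      ((mem_doublyStochastic_iff_sum.mp (eigenOverlap_mem_doublyStochastic hA.1 hB.1)).1 k j)
  have hterm := (Finset.sum_eq_zero_iff_of_nonneg hnonneg).mp
    (hsum.antisymm (Finset.sum_nonneg hnonneg)) i (Finset.mem_univ i)
  exact (mul_eq_zero.mp hterm).resolve_left hi.ne'

/-- Klein's inequality; the support condition `p • ρ ≤ σ` is what makes the convention
`log 0 = 0` harmless. -/
theorem re_trace_sub_le_relEnt {ρ σ : Matrix n n ℂ} (hρ : ρ.PosSemidef) (hσ : σ.PosSemidef)
    {p : ℝ} (hp : 0 < p) (hle : (σ - p • ρ).PosSemidef) :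
    (ρ.trace - σ.trace).re ≤ relEnt ρ σ := by
  rw [relEnt, re_trace_mul_matLog_self hρ.1, re_trace_mul_matLog hρ.1 hσ.1, Complex.sub_re,
    ← sum_eigenvalues_eq_re_trace hρ.1, ← sum_eigenvalues_eq_re_trace hσ.1]
  exact sum_sub_sum_le_of_mem_doublyStochastic (eigenOverlap_mem_doublyStochastic hρ.1 hσ.1)
    hρ.eigenvalues_nonneg hσ.eigenvalues_nonneg
    fun i j hi hj => eigenOverlap_eq_zero_of_smul_le hρ hσ hp hle hi hj

end Klein

lemma sum_kronecker {R ι l m n p : Type*} [NonUnitalNonAssocSemiring R] (s : Finset ι)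
    (A : ι → Matrix l m R) (B : Matrix n p R) :
    (∑ i ∈ s, A i) ⊗ₖ B = ∑ i ∈ s, A i ⊗ₖ B := by
  ext
  simp [Matrix.sum_apply, Finset.sum_mul]

section PartialTrace

variable {α β : Type*} [Fintype α]

lemma ptraceA_eq_sum_submatrix_s3 (X : Matrix (α × β) (α × β) ℂ) :
    ptraceA X = ∑ t, X.submatrix (Prod.mk t) (Prod.mk t) := by
  ext y y'
  simp [ptraceA, Matrix.sum_apply]

lemma ptraceA_posSemidef [Fintype β] {X : Matrix (α × β) (α × β) ℂ} (hX : X.PosSemidef) :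
    (ptraceA X).PosSemidef := by
  rw [ptraceA_eq_sum_submatrix_s3]
  exact posSemidef_sum _ fun t _ => hX.submatrix _

lemma trace_ptraceA_s3 [Fintype β] (X : Matrix (α × β) (α × β) ℂ) : (ptraceA X).trace = X.trace := by
  simp only [Matrix.trace, Matrix.diag, ptraceA, Fintype.sum_prod_type]
  exact Finset.sum_comm

lemma ptraceA_sum {ι : Type*} (s : Finset ι) (X : ι → Matrix (α × β) (α × β) ℂ) :
    ptraceA (∑ i ∈ s, X i) = ∑ i ∈ s, ptraceA (X i) := by
  ext y y'
  simp only [ptraceA, Matrix.sum_apply]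
  exact Finset.sum_comm

lemma ptraceA_kronecker_one_mul [Fintype β] [DecidableEq β] (M : Matrix α α ℂ)
    (X : Matrix (α × β) (α × β) ℂ) :
    ptraceA ((M ⊗ₖ (1 : Matrix β β ℂ)) * X) = ptraceA (X * (M ⊗ₖ (1 : Matrix β β ℂ))) := by
  ext y y'
  simp only [ptraceA, Matrix.mul_apply, kroneckerMap_apply, Matrix.one_apply, mul_ite, mul_one,
    mul_zero, ite_mul, zero_mul, Fintype.sum_prod_type, Finset.sum_ite_eq, Finset.mem_univ,
    if_true, Finset.sum_ite_eq']
  rw [Finset.sum_comm]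
  simp only [mul_comm]

end PartialTrace

section Measurement

variable (P : POVM ι a) {ρ : Matrix (a × b) (a × b) ℂ}

/-- The unnormalised post-measurement state `p_i ρ̃_i = Tr_A[(Π_i ⊗ I) ρ_AB]`. -/
def povmBranch (ρ : Matrix (a × b) (a × b) ℂ) (i : ι) : Matrix b b ℂ :=
  ptraceA ((P.elem i ⊗ₖ (1 : Matrix b b ℂ)) * ρ)

open scoped MatrixOrder in
lemma povmBranch_posSemidef (hρ : ρ.PosSemidef) (i : ι) : (povmBranch P ρ i).PosSemidef := by
  obtain ⟨B, hB⟩ := CStarAlgebra.nonneg_iff_eq_star_mul_self.mp (P.pos i).nonneg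
  set K := B ⊗ₖ (1 : Matrix b b ℂ)
  have hconj : povmBranch P ρ i = ptraceA (K * ρ * Kᴴ) := by
    rw [povmBranch, hB, Matrix.star_eq_conjTranspose, ← Matrix.one_mul (1 : Matrix b b ℂ),
      Matrix.mul_kronecker_mul, Matrix.mul_assoc, ptraceA_kronecker_one_mul,
      Matrix.conjTranspose_kronecker, Matrix.conjTranspose_one]
  rw [hconj]
  exact ptraceA_posSemidef (hρ.mul_mul_conjTranspose_same K)

lemma trace_povmBranch (hρ : ρ.PosSemidef) (i : ι) :
    (povmBranch P ρ i).trace = povmProb P ρ i := by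
  rw [povmProb, ← trace_ptraceA_s3, ← povmBranch, ofReal_re_trace (povmBranch_posSemidef P hρ i).1]

lemma povmProb_nonneg (hρ : ρ.PosSemidef) (i : ι) : 0 ≤ povmProb P ρ i := by
  have h := (povmBranch_posSemidef P hρ i).trace_nonneg
  rwa [trace_povmBranch P hρ, Complex.zero_le_real] at h

lemma povmBranch_eq_zero (hρ : ρ.PosSemidef) {i : ι} (hi : ¬ 0 < povmProb P ρ i) :
    povmBranch P ρ i = 0 := by
  rw [← (povmBranch_posSemidef P hρ i).trace_eq_zero_iff, trace_povmBranch P hρ,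
    le_antisymm (not_lt.mp hi) (povmProb_nonneg P hρ i), Complex.ofReal_zero]

lemma sum_povmBranch (ρ : Matrix (a × b) (a × b) ℂ) : ∑ i, povmBranch P ρ i = ptraceA ρ := by
  simp only [povmBranch, ← ptraceA_sum, ← Finset.sum_mul, ← sum_kronecker, P.sum_eq,
    Matrix.one_kronecker_one, Matrix.one_mul]

lemma sum_re_trace_povmBranch_mul (ρ : Matrix (a × b) (a × b) ℂ) (M : Matrix b b ℂ) :
    ∑ i, (povmBranch P ρ i * M).trace.re = (ptraceA ρ * M).trace.re := by
  rw [← sum_povmBranch P ρ, Finset.sum_mul, Matrix.trace_sum, Complex.re_sum]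

lemma povmBranch_le_ptraceA (hρ : ρ.PosSemidef) (i : ι) :
    (ptraceA ρ - povmBranch P ρ i).PosSemidef := by
  classical
  rw [← sum_povmBranch P ρ, ← Finset.add_sum_erase _ _ (Finset.mem_univ i), add_sub_cancel_left]
  exact posSemidef_sum _ fun j _ => povmBranch_posSemidef P hρ j

lemma smul_povmPost {i : ι} (hi : povmProb P ρ i ≠ 0) :
    povmProb P ρ i • povmPost P ρ i = povmBranch P ρ i := by
  rw [povmPost, smul_smul, mul_inv_cancel₀ hi, one_smul, povmBranch]

lemma povmPost_isDensityMatrix (hρ : ρ.PosSemidef) {i : ι} (hi : 0 < povmProb P ρ i) :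
    IsDensityMatrix (povmPost P ρ i) := by
  refine ⟨(povmBranch_posSemidef P hρ i).smul (inv_nonneg.mpr hi.le), ?_⟩
  rw [povmPost, Matrix.trace_smul, ← povmBranch, trace_povmBranch P hρ, Complex.real_smul,
    ← Complex.ofReal_mul, inv_mul_cancel₀ hi.ne', Complex.ofReal_one]

end Measurement

section WorkSum

variable (P : POVM ι a) {ρ : Matrix (a × b) (a × b) ℂ}

theorem workSum_eq_relEnt_add_workSum (hρ : ρ.PosSemidef) (γ : Matrix b b ℂ) :
    workSum P ρ γ = relEnt (ptraceA ρ) γ + workSum P ρ (ptraceA ρ) := by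
  have hterm : ∀ i, (if 0 < povmProb P ρ i then povmProb P ρ i * relEnt (povmPost P ρ i) γ
      else 0) = (if 0 < povmProb P ρ i then
        povmProb P ρ i * relEnt (povmPost P ρ i) (ptraceA ρ) else 0) +
      ((povmBranch P ρ i * matLog (ptraceA ρ)).trace.re -
        (povmBranch P ρ i * matLog γ).trace.re) := by
    intro i
    split_ifs with hi
    · rw [← smul_povmPost P hi.ne', re_trace_smul_mul, re_trace_smul_mul, relEnt, relEnt]
      ring
    · simp [povmBranch_eq_zero P hρ hi]
  rw [workSum, workSum, Finset.sum_congr rfl fun i _ => hterm i, Finset.sum_add_distrib,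
    Finset.sum_sub_distrib, sum_re_trace_povmBranch_mul, sum_re_trace_povmBranch_mul, relEnt]
  ring

theorem workSum_ptraceA_nonneg (hρ : IsDensityMatrix ρ) : 0 ≤ workSum P ρ (ptraceA ρ) := by
  refine Finset.sum_nonneg fun i _ => ?_
  split_ifs with hi
  · have hpost := povmPost_isDensityMatrix P hρ.1 hi
    have hklein := re_trace_sub_le_relEnt hpost.1 (ptraceA_posSemidef hρ.1) hi
      (by rw [smul_povmPost P hi.ne']; exact povmBranch_le_ptraceA P hρ.1 i)
    rw [hpost.2, trace_ptraceA_s3, hρ.2, sub_self, Complex.zero_re] at hklein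
    exact mul_nonneg hi.le hklein
  · exact le_rfl

theorem workSum_ptraceA_le_vN (hρ : ρ.PosSemidef) : workSum P ρ (ptraceA ρ) ≤ vN (ptraceA ρ) := by
  rw [vN, ← sum_re_trace_povmBranch_mul P ρ, ← Finset.sum_neg_distrib]
  refine Finset.sum_le_sum fun i _ => ?_
  split_ifs with hi
  · have hvN := vN_nonneg (povmPost_isDensityMatrix P hρ hi)
    rw [vN] at hvN
    rw [relEnt, mul_sub, ← smul_povmPost P hi.ne', re_trace_smul_mul]
    linarith [mul_nonneg hi.le hvN]
  · simp [povmBranch_eq_zero P hρ hi]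

end WorkSum

def POVM.trivial (a : Type*) [Fintype a] [DecidableEq a] : POVM (Fin 1) a :=
  ⟨fun _ => 1, fun _ => Matrix.PosSemidef.one, by simp⟩

theorem workSum_le_mul_Wa {ρ : Matrix (a × b) (a × b) ℂ} {γ : Matrix b b ℂ} {β C : ℝ}
    (hβ : 0 < β) (hC : ∀ k (Q : POVM (Fin k) a), workSum Q ρ γ ≤ C) {k : ℕ}
    (P : POVM (Fin k) a) : workSum P ρ γ ≤ β * Wa ρ γ β := by
  have hbound : ∀ k (Q : POVM (Fin k) a), 1 / β * workSum Q ρ γ ≤ 1 / β * C :=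
    fun k Q => mul_le_mul_of_nonneg_left (hC k Q) (by positivity)
  have hinner : ∀ k, BddAbove (Set.range fun Q : POVM (Fin k) a => 1 / β * workSum Q ρ γ) :=
    fun k => ⟨_, Set.forall_mem_range.2 (hbound k)⟩
  -- `max _ 0` covers the indices `k` with no POVM, where the inner supremum is `sSup ∅ = 0`.
  have houter : BddAbove (Set.range fun k => ⨆ Q : POVM (Fin k) a, 1 / β * workSum Q ρ γ) :=
    ⟨max (1 / β * C) 0, Set.forall_mem_range.2 fun k =>
      Real.iSup_le (fun Q => (hbound k Q).trans (le_max_left _ _)) (le_max_right _ _)⟩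
  have hle : 1 / β * workSum P ρ γ ≤ Wa ρ γ β :=
    (le_ciSup (hinner k) P).trans (le_ciSup houter k)
  calc workSum P ρ γ = β * (1 / β * workSum P ρ γ) := by field_simp
    _ ≤ β * Wa ρ γ β := mul_le_mul_of_nonneg_left hle hβ.le

theorem assisted_work_distillation_stmt3_general {dA dB : ℕ}
    (ρ : Matrix (Fin dA × Fin dB) (Fin dA × Fin dB) ℂ) (hρ : IsDensityMatrix ρ)
    (γB : Matrix (Fin dB) (Fin dB) ℂ)
    (β : ℝ) (hβ : 0 < β) :
    (∀ (ι : Type) (_ : Fintype ι) (P : POVM ι (Fin dA)),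
        relEnt (ptraceA ρ) γB ≤ workSum P ρ γB) ∧
      relEnt (ptraceA ρ) γB ≤ β * Wa ρ γB β := by
  have hlower : ∀ (ι : Type) [Fintype ι] (P : POVM ι (Fin dA)),
      relEnt (ptraceA ρ) γB ≤ workSum P ρ γB := fun ι _ P => by
    rw [workSum_eq_relEnt_add_workSum P hρ.1]
    linarith [workSum_ptraceA_nonneg P hρ]
  have hupper : ∀ k (P : POVM (Fin k) (Fin dA)),
      workSum P ρ γB ≤ relEnt (ptraceA ρ) γB + vN (ptraceA ρ) := fun k P => by
    rw [workSum_eq_relEnt_add_workSum P hρ.1]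
    linarith [workSum_ptraceA_le_vN P hρ.1]
  exact ⟨fun ι _ P => hlower ι P,
    (hlower _ (POVM.trivial _)).trans (workSum_le_mul_Wa hβ hupper _)⟩

/-- for every POVM on Alice's side,
`Σ_{i : p_i>0} p_i S(ρ̃_i‖γ_B) ≥ S(ρ_B‖γ_B)`; consequently `β·W_a(ρ_AB) ≥ S(ρ_B‖γ_B)`. -/
theorem assisted_work_distillation_stmt3 {dA dB : ℕ}
    (ρ : Matrix (Fin dA × Fin dB) (Fin dA × Fin dB) ℂ) (hρ : IsDensityMatrix ρ)
    (γB : Matrix (Fin dB) (Fin dB) ℂ) (hγB : IsDensityMatrix γB) (hγBpd : γB.PosDef)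
    (β : ℝ) (hβ : 0 < β) :
    (∀ (ι : Type) (_ : Fintype ι) (P : POVM ι (Fin dA)),
        relEnt (ptraceA ρ) γB ≤ workSum P ρ γB) ∧
      relEnt (ptraceA ρ) γB ≤ β * Wa ρ γB β :=
  assisted_work_distillation_stmt3_general ρ hρ γB β hβ

end AWD
end
end

section
/- Let φ_AB = |φ⟩⟨φ| be a pure density matrix on ℂ^{d_A} ⊗ ℂ^{d_B}, with reduced states ρ_A = Tr_B[φ_AB] and ρ_B = Tr_A[φ_AB], and let γ_B be a positive definite density matrix on ℂ^{d_B}. Then S(φ_AB ‖ ρ_A ⊗ γ_B) = S(ρ_B ‖ γ_B) + 2·S(ρ_B); equivalently, the relative entropy of collaboration satisfies β·W_r(φ_AB) = S(ρ_B‖γ_B) + 2S(ρ_B). -/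
open Matrix BigOperators
open scoped Kronecker ComplexOrder

noncomputable section

/-! For `φ = vec M` the reduced states are `ρ_A = M Mᴴ` and `ρ_B = (Mᴴ M)ᵀ`; since
`log (M Mᴴ) M = M log (Mᴴ M)`, both have the same entropy, and `Tr[φ log φ] = 0`.
The cross term splits, `Tr[φ log (ρ_A ⊗ γ)] = Tr[ρ_A log ρ_A] + Tr[ρ_B log γ]`, although
`log (ρ_A ⊗ γ) ≠ log ρ_A ⊗ 1 + 1 ⊗ log γ` on the kernel of `ρ_A` (where `log 0 = 0`):
the two sides agree after multiplying by `ρ_A ⊗ 1`, because `λ log (λ μ) = λ (log λ + log μ)`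
for `μ > 0`, and `φ = (M ⊗ 1) vec 1` lies in the range of `ρ_A ⊗ 1 = (M ⊗ 1)(M ⊗ 1)ᴴ`. -/

theorem Real.log_mul_mul_eq_add_mul (x : ℝ) {y : ℝ} (hy : y ≠ 0) :
    Real.log (x * y) * x = (Real.log x + Real.log y) * x := by
  rcases eq_or_ne x 0 with rfl | hx
  · simp
  · rw [Real.log_mul hx hy]

namespace AWD

section MatLog

variable {n m : Type*} [Fintype n] [DecidableEq n] [Fintype m] [DecidableEq m]

theorem diagonal_map_mul_eq_mul_diagonal_map {x : n → ℝ} {y : m → ℝ} {C : Matrix n m ℂ}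
    (h : diagonal (fun i => (x i : ℂ)) * C = C * diagonal (fun j => (y j : ℂ))) (f : ℝ → ℝ) :
    diagonal (fun i => (f (x i) : ℂ)) * C = C * diagonal (fun j => (f (y j) : ℂ)) := by
  ext i j
  have hij := congr_fun (congr_fun h i) j
  simp only [diagonal_mul, mul_diagonal] at hij ⊢
  by_cases hC : C i j = 0
  · simp [hC]
  · have : x i = y j := by exact_mod_cast mul_right_cancel₀ hC (hij.trans (mul_comm _ _))
    rw [this, mul_comm]

theorem _root_.Matrix.IsHermitian.star_eigenvectorUnitary_mul {A : Matrix n n ℂ}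
    (hA : A.IsHermitian) :
    star (hA.eigenvectorUnitary : Matrix n n ℂ) * A =
      diagonal (fun i => (hA.eigenvalues i : ℂ)) * star (hA.eigenvectorUnitary : Matrix n n ℂ) := by
  conv_lhs => arg 2; rw [hA.spectral_theorem]
  simp [← Matrix.mul_assoc, Function.comp_def]

theorem _root_.Matrix.IsHermitian.mul_eigenvectorUnitary {A : Matrix n n ℂ}
    (hA : A.IsHermitian) :
    A * (hA.eigenvectorUnitary : Matrix n n ℂ) =
      (hA.eigenvectorUnitary : Matrix n n ℂ) * diagonal (fun i => (hA.eigenvalues i : ℂ)) := by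
  conv_lhs => arg 1; rw [hA.spectral_theorem]
  simp [Matrix.mul_assoc, Function.comp_def]

theorem matLog_mul_eq_mul_diagonal {σ : Matrix n n ℂ} (hσ : σ.IsHermitian) {N : Matrix n m ℂ}
    {d : m → ℝ} (h : σ * N = N * diagonal (fun j => (d j : ℂ))) :
    matLog σ * N = N * diagonal (fun j => (Real.log (d j) : ℂ)) := by
  set U := (hσ.eigenvectorUnitary : Matrix n n ℂ)
  have hUN : diagonal (fun i => (hσ.eigenvalues i : ℂ)) * (star U * N) =
      (star U * N) * diagonal (fun j => (d j : ℂ)) := by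
    rw [← Matrix.mul_assoc, ← hσ.star_eigenvectorUnitary_mul, Matrix.mul_assoc, h,
      Matrix.mul_assoc]
  rw [matLog, dif_pos hσ, Matrix.mul_assoc, Matrix.mul_assoc,
    diagonal_map_mul_eq_mul_diagonal_map hUN Real.log, ← Matrix.mul_assoc, ← Matrix.mul_assoc,
    Unitary.mul_star_self_of_mem hσ.eigenvectorUnitary.2, Matrix.one_mul]

theorem matLog_transpose (A : Matrix n n ℂ) : matLog Aᵀ = (matLog A)ᵀ := by
  by_cases hA : A.IsHermitian
  · set U := (hA.eigenvectorUnitary : Matrix n n ℂ)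
    have hUU : (star U)ᵀ * Uᵀ = 1 := by
      rw [← transpose_mul, Unitary.mul_star_self_of_mem hA.eigenvectorUnitary.2, transpose_one]
    have hlog := matLog_mul_eq_mul_diagonal (isHermitian_transpose_iff.mpr hA) (N := (star U)ᵀ)
      (d := hA.eigenvalues) (by
        rw [← transpose_mul, hA.star_eigenvectorUnitary_mul, transpose_mul, diagonal_transpose])
    calc matLog Aᵀ = matLog Aᵀ * (star U)ᵀ * Uᵀ := by rw [Matrix.mul_assoc, hUU, Matrix.mul_one]
      _ = (matLog A)ᵀ := by
        rw [hlog, matLog, dif_pos hA, transpose_mul, transpose_mul, diagonal_transpose,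
          Matrix.mul_assoc]
  · rw [matLog, matLog, dif_neg hA, dif_neg (mt isHermitian_transpose_iff.mp hA), transpose_zero]

theorem matLog_self_mul_conjTranspose_mul (N : Matrix m n ℂ) :
    matLog (N * Nᴴ) * N = N * matLog (Nᴴ * N) := by
  have hH := isHermitian_conjTranspose_mul_self N
  set V := (hH.eigenvectorUnitary : Matrix n n ℂ)
  have hNV := matLog_mul_eq_mul_diagonal (isHermitian_mul_conjTranspose_self N) (N := N * V)
    (d := hH.eigenvalues) (by
      rw [Matrix.mul_assoc, ← Matrix.mul_assoc Nᴴ, hH.mul_eigenvectorUnitary, Matrix.mul_assoc])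
  calc matLog (N * Nᴴ) * N = matLog (N * Nᴴ) * (N * V) * star V := by
        rw [Matrix.mul_assoc, Matrix.mul_assoc,
          Unitary.mul_star_self_of_mem hH.eigenvectorUnitary.2, Matrix.mul_one]
    _ = N * matLog (Nᴴ * N) := by
        rw [hNV, matLog, dif_pos hH]
        simp only [Matrix.mul_assoc]
        rfl

theorem trace_mul_matLog_self_mul_conjTranspose (N : Matrix m n ℂ) :
    (N * Nᴴ * matLog (N * Nᴴ)).trace = (Nᴴ * N * matLog (Nᴴ * N)).trace := by
  rw [Matrix.mul_assoc, trace_mul_comm, Matrix.mul_assoc, matLog_self_mul_conjTranspose_mul,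
    Matrix.mul_assoc]

theorem trace_transpose_mul_matLog_transpose (A : Matrix n n ℂ) :
    (Aᵀ * matLog Aᵀ).trace = (A * matLog A).trace := by
  rw [matLog_transpose, ← transpose_mul, trace_transpose, trace_mul_comm]

theorem matLog_kronecker_mul_kronecker_eigenvectorUnitary {A : Matrix n n ℂ}
    {γ : Matrix m m ℂ} (hA : A.IsHermitian) (hγ : γ.IsHermitian) :
    matLog (A ⊗ₖ γ) * (hA.eigenvectorUnitary ⊗ₖ hγ.eigenvectorUnitary : Matrix (n × m) _ ℂ) =
      (hA.eigenvectorUnitary ⊗ₖ hγ.eigenvectorUnitary : Matrix (n × m) _ ℂ) *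
        diagonal (fun p => (Real.log (hA.eigenvalues p.1 * hγ.eigenvalues p.2) : ℂ)) := by
  have hHerm : (A ⊗ₖ γ).IsHermitian := by
    rw [IsHermitian, conjTranspose_kronecker, hA.eq, hγ.eq]
  refine matLog_mul_eq_mul_diagonal hHerm ?_
  rw [← mul_kronecker_mul, hA.mul_eigenvectorUnitary, hγ.mul_eigenvectorUnitary,
    mul_kronecker_mul, diagonal_kronecker_diagonal]
  push_cast
  rfl

theorem matLog_kronecker_mul_kronecker_one {A : Matrix n n ℂ} {γ : Matrix m m ℂ}
    (hA : A.IsHermitian) (hγ : γ.PosDef) :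
    matLog (A ⊗ₖ γ) * (A ⊗ₖ 1) = (matLog A ⊗ₖ 1 + 1 ⊗ₖ matLog γ) * (A ⊗ₖ 1) := by
  set U := (hA.eigenvectorUnitary : Matrix n n ℂ)
  set V := (hγ.isHermitian.eigenvectorUnitary : Matrix m m ℂ)
  set lam := hA.eigenvalues
  set μ := hγ.isHermitian.eigenvalues
  set Dlam : Matrix (n × m) (n × m) ℂ := diagonal (fun i => (lam i : ℂ)) ⊗ₖ 1
  set Dlog : Matrix (n × m) (n × m) ℂ :=
    diagonal (fun i => (Real.log (lam i) : ℂ)) ⊗ₖ 1 + 1 ⊗ₖ diagonal (fun j => (Real.log (μ j) : ℂ))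
  have hAW : (A ⊗ₖ 1) * (U ⊗ₖ V) = (U ⊗ₖ V) * Dlam := by
    rw [← mul_kronecker_mul, ← mul_kronecker_mul, hA.mul_eigenvectorUnitary, Matrix.one_mul,
      Matrix.mul_one]
  have hlogA : matLog A * U = U * diagonal (fun i => (Real.log (lam i) : ℂ)) :=
    matLog_mul_eq_mul_diagonal hA hA.mul_eigenvectorUnitary
  have hlogγ : matLog γ * V = V * diagonal (fun j => (Real.log (μ j) : ℂ)) :=
    matLog_mul_eq_mul_diagonal hγ.isHermitian hγ.isHermitian.mul_eigenvectorUnitary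
  have hlogW : (matLog A ⊗ₖ 1 + 1 ⊗ₖ matLog γ) * (U ⊗ₖ V) = (U ⊗ₖ V) * Dlog := by
    simp only [Dlog, add_mul, mul_add, ← mul_kronecker_mul, hlogA, hlogγ, Matrix.one_mul,
      Matrix.mul_one]
  have hdiag :
      diagonal (fun p : n × m => (Real.log (lam p.1 * μ p.2) : ℂ)) * Dlam = Dlog * Dlam := by
    simp only [Dlam, Dlog, ← diagonal_one, diagonal_kronecker_diagonal, diagonal_add,
      diagonal_mul_diagonal, mul_one, one_mul]
    congr 1
    funext p
    exact_mod_cast congrArg Complex.ofReal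
      (Real.log_mul_mul_eq_add_mul (lam p.1) (hγ.eigenvalues_pos p.2).ne')
  suffices h : matLog (A ⊗ₖ γ) * (A ⊗ₖ 1) * (U ⊗ₖ V) =
      (matLog A ⊗ₖ 1 + 1 ⊗ₖ matLog γ) * (A ⊗ₖ 1) * (U ⊗ₖ V) by
    have hW : U ⊗ₖ V ∈ unitary (Matrix (n × m) (n × m) ℂ) :=
      kronecker_mem_unitary hA.eigenvectorUnitary.2 hγ.isHermitian.eigenvectorUnitary.2
    simpa [Matrix.mul_assoc, Unitary.mul_star_self_of_mem hW] using congr_arg (· * star (U ⊗ₖ V)) h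
  rw [Matrix.mul_assoc, hAW, ← Matrix.mul_assoc, matLog_kronecker_mul_kronecker_eigenvectorUnitary,
    Matrix.mul_assoc, hdiag, ← Matrix.mul_assoc, ← hlogW, Matrix.mul_assoc, ← hAW,
    Matrix.mul_assoc]

end MatLog

section PureStates

theorem trace_vecMulVec_mul {n : Type*} [Fintype n] (u v : n → ℂ) (L : Matrix n n ℂ) :
    (vecMulVec u v * L).trace = v ⬝ᵥ (L *ᵥ u) := by
  rw [vecMulVec_mul, trace_vecMulVec, dotProduct_comm, dotProduct_mulVec]

theorem matLog_vecMulVec_mulVec_self {n : Type*} [Fintype n] [DecidableEq n] {φ : n → ℂ}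
    (hφ : star φ ⬝ᵥ φ = 1) : matLog (vecMulVec φ (star φ)) *ᵥ φ = 0 := by
  have h := matLog_mul_eq_mul_diagonal (posSemidef_vecMulVec_self_star φ).1
    (N := replicateCol Unit φ) (d := 1) (by
      rw [← replicateCol_mulVec, vecMulVec_mulVec, hφ]
      simp)
  simpa [← replicateCol_mulVec] using h

theorem trace_vecMulVec_mul_matLog_self {n : Type*} [Fintype n] [DecidableEq n] {φ : n → ℂ}
    (hφ : star φ ⬝ᵥ φ = 1) :
    (vecMulVec φ (star φ) * matLog (vecMulVec φ (star φ))).trace = 0 := by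
  rw [trace_vecMulVec_mul, matLog_vecMulVec_mulVec_self hφ, dotProduct_zero]

end PureStates

section Bipartite

variable {a b : Type*}

theorem trace_mul_kronecker_one [Fintype a] [Fintype b] [DecidableEq b]
    (ρ : Matrix (a × b) (a × b) ℂ) (X : Matrix a a ℂ) :
    (ρ * (X ⊗ₖ (1 : Matrix b b ℂ))).trace = (ptraceB ρ * X).trace := by
  simp only [trace, diag_apply, mul_apply, kroneckerMap_apply, one_apply, mul_ite, mul_one,
    mul_zero, Fintype.sum_prod_type, Finset.sum_ite_eq', Finset.mem_univ, ↓reduceIte, ptraceB,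
    Finset.sum_mul]
  exact Finset.sum_congr rfl fun _ _ => Finset.sum_comm

theorem trace_mul_one_kronecker [Fintype a] [DecidableEq a] [Fintype b]
    (ρ : Matrix (a × b) (a × b) ℂ) (Y : Matrix b b ℂ) :
    (ρ * ((1 : Matrix a a ℂ) ⊗ₖ Y)).trace = (ptraceA ρ * Y).trace := by
  simp only [trace, diag_apply, mul_apply, kroneckerMap_apply, one_apply, ite_mul, one_mul,
    zero_mul, mul_ite, mul_zero, Fintype.sum_prod_type, Finset.sum_ite_irrel, Finset.sum_const_zero,
    Finset.sum_ite_eq', Finset.mem_univ, ↓reduceIte, ptraceA, Finset.sum_mul]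
  conv_lhs => rw [Finset.sum_comm]
  exact Finset.sum_congr rfl fun _ _ => Finset.sum_comm

theorem ptraceB_vecMulVec [Fintype b] (φ : a × b → ℂ) :
    ptraceB (vecMulVec φ (star φ)) = of (Function.curry φ) * (of (Function.curry φ))ᴴ := by
  ext i i'
  simp [ptraceB, mul_apply, vecMulVec_apply]

theorem ptraceA_vecMulVec [Fintype a] (φ : a × b → ℂ) :
    ptraceA (vecMulVec φ (star φ)) = ((of (Function.curry φ))ᴴ * of (Function.curry φ))ᵀ := by
  ext j j'
  simp [ptraceA, mul_apply, vecMulVec_apply, mul_comm]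

theorem kronecker_one_mulVec_one [Fintype b] [DecidableEq b] (φ : a × b → ℂ) :
    (of (Function.curry φ) ⊗ₖ (1 : Matrix b b ℂ)) *ᵥ (fun p => (1 : Matrix b b ℂ) p.1 p.2) =
      φ := by
  ext ⟨i, j⟩
  simp [mulVec, dotProduct, one_apply, Fintype.sum_prod_type]

theorem mulVec_eq_zero_of_mul_ptraceB_kronecker_one_eq_zero [Fintype a] [Fintype b]
    [DecidableEq b] (φ : a × b → ℂ) {D : Matrix (a × b) (a × b) ℂ}
    (h : D * (ptraceB (vecMulVec φ (star φ)) ⊗ₖ (1 : Matrix b b ℂ)) = 0) : D *ᵥ φ = 0 := by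
  set M := of (Function.curry φ)
  have hfactor : ptraceB (vecMulVec φ (star φ)) ⊗ₖ (1 : Matrix b b ℂ) =
      (M ⊗ₖ (1 : Matrix b b ℂ)) * (M ⊗ₖ (1 : Matrix b b ℂ))ᴴ := by
    rw [ptraceB_vecMulVec, conjTranspose_kronecker, conjTranspose_one, ← mul_kronecker_mul,
      Matrix.one_mul]
  rw [hfactor, mul_self_mul_conjTranspose_eq_zero] at h
  rw [← kronecker_one_mulVec_one φ, mulVec_mulVec, h, zero_mulVec]

theorem trace_vecMulVec_mul_matLog_ptraceB_kronecker [Fintype a] [DecidableEq a]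
    [Fintype b] [DecidableEq b] (φ : a × b → ℂ) {γ : Matrix b b ℂ} (hγ : γ.PosDef) :
    (vecMulVec φ (star φ) * matLog (ptraceB (vecMulVec φ (star φ)) ⊗ₖ γ)).trace =
      (ptraceB (vecMulVec φ (star φ)) * matLog (ptraceB (vecMulVec φ (star φ)))).trace +
        (ptraceA (vecMulVec φ (star φ)) * matLog γ).trace := by
  have hA : (ptraceB (vecMulVec φ (star φ))).IsHermitian := by
    rw [ptraceB_vecMulVec]
    exact isHermitian_mul_conjTranspose_self _
  set A := ptraceB (vecMulVec φ (star φ))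
  have hlog : matLog (A ⊗ₖ γ) *ᵥ φ = (matLog A ⊗ₖ 1 + 1 ⊗ₖ matLog γ) *ᵥ φ := by
    rw [← sub_eq_zero, ← sub_mulVec]
    refine mulVec_eq_zero_of_mul_ptraceB_kronecker_one_eq_zero φ ?_
    rw [sub_mul, matLog_kronecker_mul_kronecker_one hA hγ, sub_self]
  rw [trace_vecMulVec_mul, hlog, ← trace_vecMulVec_mul, Matrix.mul_add, trace_add,
    trace_mul_kronecker_one, trace_mul_one_kronecker]

theorem trace_ptraceB_mul_matLog_eq_ptraceA_of_vecMulVec [Fintype a] [DecidableEq a]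
    [Fintype b] [DecidableEq b] (φ : a × b → ℂ) :
    (ptraceB (vecMulVec φ (star φ)) * matLog (ptraceB (vecMulVec φ (star φ)))).trace =
      (ptraceA (vecMulVec φ (star φ)) * matLog (ptraceA (vecMulVec φ (star φ)))).trace := by
  rw [ptraceB_vecMulVec, ptraceA_vecMulVec, trace_transpose_mul_matLog_transpose,
    trace_mul_matLog_self_mul_conjTranspose]

end Bipartite

theorem assisted_work_distillation_stmt16_general {dA dB : ℕ}
    (φ : Fin dA × Fin dB → ℂ) (hφ : ∑ x, Complex.normSq (φ x) = 1)
    (φAB : Matrix (Fin dA × Fin dB) (Fin dA × Fin dB) ℂ)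
    (hφAB : φAB = Matrix.vecMulVec φ (star φ))
    (γB : Matrix (Fin dB) (Fin dB) ℂ) (hγBpd : γB.PosDef) :
    relEnt φAB ((ptraceB φAB) ⊗ₖ γB)
      = relEnt (ptraceA φAB) γB + 2 * vN (ptraceA φAB) := by
  have hunit : star φ ⬝ᵥ φ = 1 := by
    simp only [dotProduct, Pi.star_apply, RCLike.star_def, ← Complex.normSq_eq_conj_mul_self]
    exact_mod_cast hφ
  subst hφAB
  simp only [relEnt, vN, trace_vecMulVec_mul_matLog_self hunit,
    trace_vecMulVec_mul_matLog_ptraceB_kronecker φ hγBpd,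
    trace_ptraceB_mul_matLog_eq_ptraceA_of_vecMulVec φ, Complex.add_re, Complex.zero_re]
  ring

/-- for a pure state `φ_AB = |φ⟩⟨φ|`,
`S(φ_AB‖ρ_A⊗γ_B) = S(ρ_B‖γ_B) + 2·S(ρ_B)`; equivalently
`β·W_r(φ_AB) = S(ρ_B‖γ_B) + 2·S(ρ_B)`. -/
theorem assisted_work_distillation_stmt16 {dA dB : ℕ}
    (φ : Fin dA × Fin dB → ℂ) (hφ : ∑ x, Complex.normSq (φ x) = 1)
    (φAB : Matrix (Fin dA × Fin dB) (Fin dA × Fin dB) ℂ)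
    (hφAB : φAB = Matrix.vecMulVec φ (star φ))
    (γB : Matrix (Fin dB) (Fin dB) ℂ) (hγB : IsDensityMatrix γB) (hγBpd : γB.PosDef) :
    relEnt φAB ((ptraceB φAB) ⊗ₖ γB)
      = relEnt (ptraceA φAB) γB + 2 * vN (ptraceA φAB) :=
  assisted_work_distillation_stmt16_general φ hφ φAB hφAB γB hγBpd

end AWD
end
end
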